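/- arXiv:1204.5684 — 3 statements merged into one kernel-verified Lean document; each statement's English description precedes it below -/
import Mathlib

section
/- Let n ≥ 2 be an integer and let α, λ be real numbers with λ > 0, 0 < α < n-1 and n-1 < α+λ < 2(n-1). For w ∈ ℝⁿ set β(w) = 4|w|²/(1+|w|²)² and define Θ(w) = (2^{α+λ-n} π^{(n-1)/2} / Γ((n-1)/2)) · (|w|²/(1+|w|²))^{α+λ-n+1} · ∫₀¹ u^{(α+λ-n+1)/2 - 1} (1-u)^{(n-3)/2} (1-β(w)u)^{-α/2} du. Then for every w ∈ ℝⁿ, Θ(w) ≤ 2^{α+λ-n} π^{(n-1)/2} · Γ((α+λ-n+1)/2) Γ((n-1-α)/2) / (Γ((n-1)/2) Γ(λ/2)) · (|w|²/(1+|w|²))^{α+λ-n+1}; in particular Θ is uniformly bounded on ℝⁿ. -/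
/-!
For `u ∈ (0, 1)` and `β ≤ 1` we have `(1 - β u)^(-α/2) ≤ (1 - u)^(-α/2)`, which absorbs the last
factor of the integrand into `(1 - u)^((n-3)/2)` and leaves the Beta integrand with parameters
`a = (α+λ-n+1)/2`, `b = (n-1-α)/2`. Since `a + b = λ/2`, the integral is at most
`B(a, b) = Γ(a) Γ(b) / Γ(λ/2)`. Uniform boundedness follows because `|w|²/(1+|w|²) ≤ 1` and the
exponent `α+λ-n+1` is positive.
-/

open MeasureTheory Real Set ProbabilityTheory

lemma ofReal_rpow_mul_one_sub_rpow (a b : ℝ) {x : ℝ} (hx : x ∈ Icc (0 : ℝ) 1) :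
    ((x ^ (a - 1) * (1 - x) ^ (b - 1) : ℝ) : ℂ) =
      (x : ℂ) ^ ((a : ℂ) - 1) * (1 - (x : ℂ)) ^ ((b : ℂ) - 1) := by
  push_cast [Complex.ofReal_cpow hx.1, Complex.ofReal_cpow (sub_nonneg.2 hx.2)]
  rfl

lemma betaIntegral_ofReal (a b : ℝ) :
    Complex.betaIntegral a b = ((∫ u in (0 : ℝ)..1, u ^ (a - 1) * (1 - u) ^ (b - 1) : ℝ) : ℂ) := by
  rw [Complex.betaIntegral, ← intervalIntegral.integral_ofReal]
  refine intervalIntegral.integral_congr fun x hx => ?_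
  rw [uIcc_of_le zero_le_one] at hx
  exact (ofReal_rpow_mul_one_sub_rpow a b hx).symm

lemma intervalIntegrable_rpow_mul_one_sub_rpow {a b : ℝ} (ha : 0 < a) (hb : 0 < b) :
    IntervalIntegrable (fun u : ℝ => u ^ (a - 1) * (1 - u) ^ (b - 1)) volume 0 1 := by
  have hF := Complex.betaIntegral_convergent (u := a) (v := b) (by simpa) (by simpa)
  have hG : IntervalIntegrable (fun u : ℝ => ((u ^ (a - 1) * (1 - u) ^ (b - 1) : ℝ) : ℂ))
      volume 0 1 :=
    hF.congr fun x hx =>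
      (ofReal_rpow_mul_one_sub_rpow a b (Ioc_subset_Icc_self (by simpa using hx))).symm
  refine hG.norm.congr fun x hx => ?_
  obtain ⟨hx0, hx1⟩ : 0 < x ∧ x ≤ 1 := by simpa [uIoc_of_le zero_le_one] using hx
  have : 0 ≤ 1 - x := by linarith
  simp only [Complex.norm_real, Real.norm_eq_abs]
  exact abs_of_nonneg (by positivity)

lemma integral_rpow_mul_one_sub_rpow {a b : ℝ} (ha : 0 < a) (hb : 0 < b) :
    ∫ u in (0 : ℝ)..1, u ^ (a - 1) * (1 - u) ^ (b - 1) = beta a b := by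
  rw [beta_eq_betaIntegralReal a b ha hb, betaIntegral_ofReal, Complex.ofReal_re]

lemma four_mul_div_one_add_sq_le_one (t : ℝ) : 4 * t / (1 + t) ^ 2 ≤ 1 :=
  div_le_one_of_le₀ (by nlinarith [sq_nonneg (1 - t)]) (sq_nonneg _)

lemma integral_rpow_mul_one_sub_rpow_mul_one_sub_mul_rpow_le_beta {a b d c : ℝ} (ha : 0 < a)
    (hb : 0 < b) (hd : 0 ≤ d) (hc : c ≤ 1) :
    ∫ u in (0 : ℝ)..1, u ^ (a - 1) * (1 - u) ^ (b - 1 + d) * (1 - c * u) ^ (-d) ≤ beta a b := by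
  have hle : ∀ u ∈ Ioo (0 : ℝ) 1,
      u ^ (a - 1) * (1 - u) ^ (b - 1 + d) * (1 - c * u) ^ (-d) ≤
        u ^ (a - 1) * (1 - u) ^ (b - 1) := by
    rintro u ⟨hu0, hu1⟩
    have hcu : 1 - u ≤ 1 - c * u := by nlinarith
    calc u ^ (a - 1) * (1 - u) ^ (b - 1 + d) * (1 - c * u) ^ (-d)
        ≤ u ^ (a - 1) * (1 - u) ^ (b - 1 + d) * (1 - u) ^ (-d) := by
          have : 0 ≤ 1 - u := by linarith
          exact mul_le_mul_of_nonneg_left (rpow_le_rpow_of_nonpos (sub_pos.2 hu1) hcu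
            (neg_nonpos.2 hd)) (by positivity)
      _ = u ^ (a - 1) * (1 - u) ^ (b - 1) := by
          rw [mul_assoc, ← rpow_add (by linarith), add_neg_cancel_right]
  have hnonneg : ∀ u ∈ Ioo (0 : ℝ) 1,
      0 ≤ u ^ (a - 1) * (1 - u) ^ (b - 1 + d) * (1 - c * u) ^ (-d) := by
    rintro u ⟨hu0, hu1⟩
    have : 0 ≤ 1 - c * u := by nlinarith
    have : 0 ≤ 1 - u := by linarith
    positivity
  rw [← integral_rpow_mul_one_sub_rpow ha hb, intervalIntegral.integral_of_le zero_le_one,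
    intervalIntegral.integral_of_le zero_le_one, integral_Ioc_eq_integral_Ioo,
    integral_Ioc_eq_integral_Ioo]
  exact integral_mono_of_nonneg (ae_restrict_of_forall_mem measurableSet_Ioo hnonneg)
    ((intervalIntegrable_iff_integrableOn_Ioo_of_le zero_le_one).1
      (intervalIntegrable_rpow_mul_one_sub_rpow ha hb))
    (ae_restrict_of_forall_mem measurableSet_Ioo hle)

/-- `Θ(w)` as a function of `t = ‖w‖²`. -/
noncomputable def theta (n α lam t : ℝ) : ℝ :=
  2 ^ (α + lam - n) * π ^ ((n - 1) / 2) / Gamma ((n - 1) / 2) *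
    (t / (1 + t)) ^ (α + lam - n + 1) *
    ∫ u in (0 : ℝ)..1, u ^ ((α + lam - n + 1) / 2 - 1) * (1 - u) ^ ((n - 3) / 2) *
      (1 - 4 * t / (1 + t) ^ 2 * u) ^ (-(α / 2))

lemma theta_le {n α lam t : ℝ} (hα0 : 0 < α) (hα1 : α < n - 1) (hsum : n - 1 < α + lam)
    (ht : 0 ≤ t) :
    theta n α lam t ≤ 2 ^ (α + lam - n) * π ^ ((n - 1) / 2) *
      (Gamma ((α + lam - n + 1) / 2) * Gamma ((n - 1 - α) / 2) /
        (Gamma ((n - 1) / 2) * Gamma (lam / 2))) * (t / (1 + t)) ^ (α + lam - n + 1) := by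
  have ha : 0 < (α + lam - n + 1) / 2 := by linarith
  have hb : 0 < (n - 1 - α) / 2 := by linarith
  have hΓ : 0 < Gamma ((n - 1) / 2) := Gamma_pos_of_pos (by linarith)
  have hI := integral_rpow_mul_one_sub_rpow_mul_one_sub_mul_rpow_le_beta ha hb
    (d := α / 2) (by linarith) (four_mul_div_one_add_sq_le_one t)
  rw [show (n - 1 - α) / 2 - 1 + α / 2 = (n - 3) / 2 by ring, beta,
    show (α + lam - n + 1) / 2 + (n - 1 - α) / 2 = lam / 2 by ring] at hI
  refine (mul_le_mul_of_nonneg_left hI (by positivity)).trans_eq ?_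
  field_simp

theorem multilinear_embedding_stmt0_general (n : ℕ) (α lam : ℝ)
    (hα0 : 0 < α) (hα1 : α < (n : ℝ) - 1)
    (hsum1 : (n : ℝ) - 1 < α + lam) :
    (∀ w : EuclideanSpace ℝ (Fin n),
      ((2 : ℝ) ^ (α + lam - (n : ℝ)) * Real.pi ^ (((n : ℝ) - 1) / 2) /
          Real.Gamma (((n : ℝ) - 1) / 2)) *
          (‖w‖ ^ 2 / (1 + ‖w‖ ^ 2)) ^ (α + lam - (n : ℝ) + 1) *
          ∫ u in (0:ℝ)..1,
            u ^ ((α + lam - (n : ℝ) + 1) / 2 - 1) * (1 - u) ^ (((n : ℝ) - 3) / 2) *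
              (1 - (4 * ‖w‖ ^ 2 / (1 + ‖w‖ ^ 2) ^ 2) * u) ^ (-(α / 2))
        ≤ (2 : ℝ) ^ (α + lam - (n : ℝ)) * Real.pi ^ (((n : ℝ) - 1) / 2) *
            (Real.Gamma ((α + lam - (n : ℝ) + 1) / 2) * Real.Gamma (((n : ℝ) - 1 - α) / 2) /
              (Real.Gamma (((n : ℝ) - 1) / 2) * Real.Gamma (lam / 2))) *
            (‖w‖ ^ 2 / (1 + ‖w‖ ^ 2)) ^ (α + lam - (n : ℝ) + 1)) ∧
    (∃ C : ℝ, ∀ w : EuclideanSpace ℝ (Fin n),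
      ((2 : ℝ) ^ (α + lam - (n : ℝ)) * Real.pi ^ (((n : ℝ) - 1) / 2) /
          Real.Gamma (((n : ℝ) - 1) / 2)) *
          (‖w‖ ^ 2 / (1 + ‖w‖ ^ 2)) ^ (α + lam - (n : ℝ) + 1) *
          ∫ u in (0:ℝ)..1,
            u ^ ((α + lam - (n : ℝ) + 1) / 2 - 1) * (1 - u) ^ (((n : ℝ) - 3) / 2) *
              (1 - (4 * ‖w‖ ^ 2 / (1 + ‖w‖ ^ 2) ^ 2) * u) ^ (-(α / 2))
        ≤ C) := by
  have bound (w : EuclideanSpace ℝ (Fin n)) := theta_le hα0 hα1 hsum1 (sq_nonneg ‖w‖)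
  have hb : 0 < ((n : ℝ) - 1 - α) / 2 := by linarith
  have hc : 0 < ((n : ℝ) - 1) / 2 := by linarith
  have hlam : 0 < lam / 2 := by linarith
  refine ⟨bound, _, fun w => (bound w).trans (mul_le_of_le_one_right ?_ ?_)⟩
  · have ha : 0 < (α + lam - n + 1) / 2 := by linarith
    positivity
  · exact rpow_le_one (by positivity) (div_le_one_of_le₀ (by linarith) (by positivity))
      (by linarith)

/-- Theorem 2 of the paper (delta-free form): the explicit evaluation `Θ(w)` of the
bilinear hyperbolic-surface convolution is pointwise bounded by an explicit constant
times `(|w|²/(1+|w|²))^(α+λ-n+1)`; in particular it is uniformly bounded on `ℝⁿ`. -/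
theorem multilinear_embedding_stmt0 (n : ℕ) (hn : 2 ≤ n) (α lam : ℝ) (hlam : 0 < lam)
    (hα0 : 0 < α) (hα1 : α < (n : ℝ) - 1)
    (hsum1 : (n : ℝ) - 1 < α + lam) (hsum2 : α + lam < 2 * ((n : ℝ) - 1)) :
    (∀ w : EuclideanSpace ℝ (Fin n),
      ((2 : ℝ) ^ (α + lam - (n : ℝ)) * Real.pi ^ (((n : ℝ) - 1) / 2) /
          Real.Gamma (((n : ℝ) - 1) / 2)) *
          (‖w‖ ^ 2 / (1 + ‖w‖ ^ 2)) ^ (α + lam - (n : ℝ) + 1) *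
          ∫ u in (0:ℝ)..1,
            u ^ ((α + lam - (n : ℝ) + 1) / 2 - 1) * (1 - u) ^ (((n : ℝ) - 3) / 2) *
              (1 - (4 * ‖w‖ ^ 2 / (1 + ‖w‖ ^ 2) ^ 2) * u) ^ (-(α / 2))
        ≤ (2 : ℝ) ^ (α + lam - (n : ℝ)) * Real.pi ^ (((n : ℝ) - 1) / 2) *
            (Real.Gamma ((α + lam - (n : ℝ) + 1) / 2) * Real.Gamma (((n : ℝ) - 1 - α) / 2) /
              (Real.Gamma (((n : ℝ) - 1) / 2) * Real.Gamma (lam / 2))) *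
            (‖w‖ ^ 2 / (1 + ‖w‖ ^ 2)) ^ (α + lam - (n : ℝ) + 1)) ∧
    (∃ C : ℝ, ∀ w : EuclideanSpace ℝ (Fin n),
      ((2 : ℝ) ^ (α + lam - (n : ℝ)) * Real.pi ^ (((n : ℝ) - 1) / 2) /
          Real.Gamma (((n : ℝ) - 1) / 2)) *
          (‖w‖ ^ 2 / (1 + ‖w‖ ^ 2)) ^ (α + lam - (n : ℝ) + 1) *
          ∫ u in (0:ℝ)..1,
            u ^ ((α + lam - (n : ℝ) + 1) / 2 - 1) * (1 - u) ^ (((n : ℝ) - 3) / 2) *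
              (1 - (4 * ‖w‖ ^ 2 / (1 + ‖w‖ ^ 2) ^ 2) * u) ^ (-(α / 2))
        ≤ C) :=
  multilinear_embedding_stmt0_general n α lam hα0 hα1 hsum1
end

section
/- Let n ≥ 2 be an integer, a ≥ 1 a real number, and α, λ real numbers with 0 ≤ α < n-1 and α + λ > n-1. Then ∫ₐ^∞ (r²-1)^{-α/2} · r^{n-λ-2} · (1 - a²/r²)^{(n-3)/2} dr = (1/2) · a^{n-1-λ-α} · ∫₀¹ u^{(α+λ-n+1)/2 - 1} (1-u)^{(n-3)/2} (1 - u/a²)^{-α/2} du, both integrals being finite. -/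
open MeasureTheory Real Set

/-!
The substitution `r = a u^{-1/2}` maps `(0, 1)` onto `(a, ∞)` with Jacobian `(a/2) u^{-3/2}`;
since `r² - 1 = a² (1 - u/a²) / u` and `1 - a²/r² = 1 - u`, it turns the radial integrand into
`(1/2) a^{n-1-λ-α}` times the integrand on the right. Finiteness comes from
`(1 - u/a²)^{-α/2} ≤ (1 - u)^{-α/2}` (as `a ≥ 1`, `α ≥ 0`), which reduces it to a beta
integral whose exponents `(α+λ-n+1)/2 - 1` and `(n-3-α)/2` exceed `-1`.
-/

theorem intervalIntegrable_rpow_mul_one_sub_rpow_s1 {p q : ℝ} (hp : -1 < p) (hq : -1 < q) :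
    IntervalIntegrable (fun x : ℝ => x ^ p * (1 - x) ^ q) volume 0 1 := by
  have left_half : ∀ p q : ℝ, -1 < p →
      IntervalIntegrable (fun x : ℝ => x ^ p * (1 - x) ^ q) volume 0 (1 / 2) := by
    intro p q hp
    refine (intervalIntegral.intervalIntegrable_rpow' hp).mul_continuousOn
      (ContinuousOn.rpow_const (by fun_prop) fun x hx => Or.inl ?_)
    rw [uIcc_of_le (by norm_num)] at hx
    linarith [hx.2]
  have right_half := ((left_half q p hq).comp_sub_left 1).symm
  simp only [sub_sub_cancel, mul_comm ((1 - _ : ℝ) ^ q)] at right_half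
  norm_num at right_half
  exact (left_half p q hp).trans right_half

theorem intervalIntegrable_rpow_mul_one_sub_rpow_mul_one_sub_div_rpow {a p q s : ℝ}
    (ha : 1 ≤ a) (hs : 0 ≤ s) (hp : -1 < p) (hqs : -1 < q - s) :
    IntervalIntegrable (fun u : ℝ => u ^ p * (1 - u) ^ q * (1 - u / a ^ 2) ^ (-s))
      volume 0 1 := by
  rw [intervalIntegrable_iff_integrableOn_Ioo_of_le zero_le_one]
  have hbeta := intervalIntegrable_rpow_mul_one_sub_rpow_s1 hp hqs
  rw [intervalIntegrable_iff_integrableOn_Ioo_of_le zero_le_one] at hbeta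
  refine hbeta.mono' (by fun_prop) ?_
  filter_upwards [ae_restrict_mem measurableSet_Ioo] with u ⟨hu0, hu1⟩
  have hua : u / a ^ 2 ≤ u := div_le_self hu0.le (by nlinarith)
  have h1u : 0 < 1 - u := by linarith
  have hpos : 0 < 1 - u / a ^ 2 := by linarith
  rw [norm_of_nonneg (by positivity)]
  calc u ^ p * (1 - u) ^ q * (1 - u / a ^ 2) ^ (-s)
      ≤ u ^ p * (1 - u) ^ q * (1 - u) ^ (-s) :=
        mul_le_mul_of_nonneg_left
          (Real.rpow_le_rpow_of_nonpos h1u (by linarith) (by linarith)) (by positivity)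
    _ = u ^ p * (1 - u) ^ (q - s) := by
        rw [mul_assoc, ← Real.rpow_add h1u, ← sub_eq_add_neg]

section Substitution

variable {a : ℝ}

theorem strictAntiOn_mul_rpow_neg_half (ha : 0 < a) :
    StrictAntiOn (fun u : ℝ => a * u ^ (-(1 / 2) : ℝ)) (Ioi 0) := fun _ hu _ _ huv =>
  mul_lt_mul_of_pos_left (Real.rpow_lt_rpow_of_neg hu huv (by norm_num)) ha

theorem image_mul_rpow_neg_half_Ioo (ha : 0 < a) :
    (fun u : ℝ => a * u ^ (-(1 / 2) : ℝ)) '' Ioo 0 1 = Ioi a := by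
  ext r
  constructor
  · rintro ⟨u, hu, rfl⟩
    simpa using strictAntiOn_mul_rpow_neg_half ha hu.1 (mem_Ioi.2 one_pos) hu.2
  · intro (hr : a < r)
    have hr0 : 0 < r := ha.trans hr
    refine ⟨(a / r) ^ 2, ⟨by positivity, by
      rw [div_pow, div_lt_one (by positivity)]; nlinarith⟩, ?_⟩
    dsimp only
    rw [← Real.rpow_natCast, ← Real.rpow_mul (by positivity)]
    norm_num [Real.rpow_neg_one]
    field_simp

theorem hasDerivAt_mul_rpow_neg_half {u : ℝ} (hu : 0 < u) :
    HasDerivAt (fun u : ℝ => a * u ^ (-(1 / 2) : ℝ)) (-(a / 2 * u ^ (-(3 / 2) : ℝ))) u := by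
  refine ((Real.hasDerivAt_rpow_const (Or.inl hu.ne')).const_mul a).congr_deriv ?_
  norm_num
  ring

variable {E : Type*} [NormedAddCommGroup E] [NormedSpace ℝ E]

theorem integrableOn_Ioi_iff_integrableOn_Ioo_mul_rpow_neg_half (ha : 0 < a) (g : ℝ → E) :
    IntegrableOn g (Ioi a) ↔
      IntegrableOn (fun u : ℝ => (a / 2 * u ^ (-(3 / 2) : ℝ)) • g (a * u ^ (-(1 / 2) : ℝ)))
        (Ioo 0 1) := by
  rw [← image_mul_rpow_neg_half_Ioo ha, integrableOn_image_iff_integrableOn_abs_deriv_smul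
    measurableSet_Ioo (fun u hu => (hasDerivAt_mul_rpow_neg_half hu.1).hasDerivWithinAt)
    ((strictAntiOn_mul_rpow_neg_half ha).injOn.mono Ioo_subset_Ioi_self)]
  refine integrableOn_congr_fun (fun u hu => ?_) measurableSet_Ioo
  rw [abs_neg, abs_of_pos (by have := hu.1; positivity)]

theorem integral_Ioi_eq_integral_Ioo_mul_rpow_neg_half (ha : 0 < a) (g : ℝ → E) :
    ∫ r in Ioi a, g r =
      ∫ u in Ioo 0 1, (a / 2 * u ^ (-(3 / 2) : ℝ)) • g (a * u ^ (-(1 / 2) : ℝ)) := by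
  rw [← image_mul_rpow_neg_half_Ioo ha, integral_image_eq_integral_abs_deriv_smul
    measurableSet_Ioo (fun u hu => (hasDerivAt_mul_rpow_neg_half hu.1).hasDerivWithinAt)
    ((strictAntiOn_mul_rpow_neg_half ha).injOn.mono Ioo_subset_Ioi_self)]
  refine setIntegral_congr_fun measurableSet_Ioo (fun u hu => ?_)
  rw [abs_neg, abs_of_pos (by have := hu.1; positivity)]

end Substitution

theorem jacobian_mul_radial_integrand_mul_rpow_neg_half {a u s t q : ℝ} (ha : 0 < a)
    (hu : 0 < u) (hua : u ≤ a ^ 2) :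
    a / 2 * u ^ (-(3 / 2) : ℝ) *
        (((a * u ^ (-(1 / 2) : ℝ)) ^ 2 - 1) ^ (-s) * (a * u ^ (-(1 / 2) : ℝ)) ^ t *
          (1 - a ^ 2 / (a * u ^ (-(1 / 2) : ℝ)) ^ 2) ^ q) =
      1 / 2 * a ^ (1 + t - 2 * s) *
        (u ^ (s - t / 2 - 3 / 2) * (1 - u) ^ q * (1 - u / a ^ 2) ^ (-s)) := by
  have hsq : (a * u ^ (-(1 / 2) : ℝ)) ^ 2 = a ^ 2 / u := by
    rw [mul_pow, ← Real.rpow_natCast (u ^ _), ← Real.rpow_mul hu.le]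
    norm_num [Real.rpow_neg_one, div_eq_mul_inv]
  have hsub : 0 ≤ 1 - u / a ^ 2 := by
    rw [sub_nonneg, div_le_one (by positivity)]; exact hua
  have hdiff : ((a * u ^ (-(1 / 2) : ℝ)) ^ 2 - 1) ^ (-s) =
      a ^ (-2 * s) * (1 - u / a ^ 2) ^ (-s) * u ^ s := by
    have : (a * u ^ (-(1 / 2) : ℝ)) ^ 2 - 1 = (a ^ 2 * (1 - u / a ^ 2)) * u⁻¹ := by
      rw [hsq]; field_simp
    rw [this, Real.mul_rpow (by positivity) (by positivity),
      Real.mul_rpow (by positivity) hsub, Real.inv_rpow hu.le, ← Real.rpow_neg hu.le, neg_neg,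
      ← Real.rpow_natCast, ← Real.rpow_mul ha.le]
    norm_num
  have hpow : (a * u ^ (-(1 / 2) : ℝ)) ^ t = a ^ t * u ^ (-(t / 2)) := by
    rw [Real.mul_rpow ha.le (by positivity), ← Real.rpow_mul hu.le]
    ring_nf
  have hratio : a ^ 2 / (a * u ^ (-(1 / 2) : ℝ)) ^ 2 = u := by
    rw [hsq]; field_simp
  have ha_exp : a ^ (1 + t - 2 * s) = a * a ^ t * a ^ (-2 * s) := by
    rw [sub_eq_add_neg, Real.rpow_add ha, Real.rpow_add ha, Real.rpow_one, neg_mul]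
  have hu_exp : u ^ (s - t / 2 - 3 / 2) = u ^ (-(3 / 2) : ℝ) * u ^ s * u ^ (-(t / 2)) := by
    rw [← Real.rpow_add hu, ← Real.rpow_add hu]
    ring_nf
  rw [hdiff, hpow, hratio, ha_exp, hu_exp]
  ring

theorem multilinear_embedding_stmt1_general (n : ℕ) (a α lam : ℝ) (ha : 1 ≤ a)
    (hα0 : 0 ≤ α) (hα1 : α < (n : ℝ) - 1) (hsum : (n : ℝ) - 1 < α + lam) :
    IntegrableOn
      (fun r : ℝ => (r ^ 2 - 1) ^ (-(α / 2)) * r ^ ((n : ℝ) - lam - 2) *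
        (1 - a ^ 2 / r ^ 2) ^ (((n : ℝ) - 3) / 2)) (Set.Ioi a) ∧
    IntervalIntegrable
      (fun u : ℝ => u ^ ((α + lam - (n : ℝ) + 1) / 2 - 1) * (1 - u) ^ (((n : ℝ) - 3) / 2) *
        (1 - u / a ^ 2) ^ (-(α / 2))) volume 0 1 ∧
    ∫ r in Set.Ioi a, (r ^ 2 - 1) ^ (-(α / 2)) * r ^ ((n : ℝ) - lam - 2) *
        (1 - a ^ 2 / r ^ 2) ^ (((n : ℝ) - 3) / 2)
      = (1 / 2) * a ^ ((n : ℝ) - 1 - lam - α) *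
        ∫ u in (0:ℝ)..1, u ^ ((α + lam - (n : ℝ) + 1) / 2 - 1) *
          (1 - u) ^ (((n : ℝ) - 3) / 2) * (1 - u / a ^ 2) ^ (-(α / 2)) := by
  have ha0 : 0 < a := by linarith
  have hbeta := intervalIntegrable_rpow_mul_one_sub_rpow_mul_one_sub_div_rpow
    (p := (α + lam - n + 1) / 2 - 1) (q := (n - 3) / 2) ha (by linarith : 0 ≤ α / 2)
    (by linarith) (by linarith)
  have hsubst : ∀ u ∈ Ioo (0 : ℝ) 1,
      (a / 2 * u ^ (-(3 / 2) : ℝ)) • ((((a * u ^ (-(1 / 2) : ℝ)) ^ 2 - 1) ^ (-(α / 2))) *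
        (a * u ^ (-(1 / 2) : ℝ)) ^ ((n : ℝ) - lam - 2) *
        (1 - a ^ 2 / (a * u ^ (-(1 / 2) : ℝ)) ^ 2) ^ (((n : ℝ) - 3) / 2)) =
      1 / 2 * a ^ ((n : ℝ) - 1 - lam - α) * (u ^ ((α + lam - (n : ℝ) + 1) / 2 - 1) *
        (1 - u) ^ (((n : ℝ) - 3) / 2) * (1 - u / a ^ 2) ^ (-(α / 2))) := fun u hu => by
    rw [smul_eq_mul, jacobian_mul_radial_integrand_mul_rpow_neg_half ha0 hu.1 (by nlinarith [hu.2])]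
    -- the two sides differ only in how the exponents are written
    ring_nf
  rw [intervalIntegrable_iff_integrableOn_Ioo_of_le zero_le_one] at hbeta ⊢
  refine ⟨?_, hbeta, ?_⟩
  · rw [integrableOn_Ioi_iff_integrableOn_Ioo_mul_rpow_neg_half ha0]
    exact IntegrableOn.congr_fun (hbeta.const_mul _) (fun u hu => (hsubst u hu).symm)
      measurableSet_Ioo
  · rw [integral_Ioi_eq_integral_Ioo_mul_rpow_neg_half ha0,
      setIntegral_congr_fun measurableSet_Ioo hsubst, integral_const_mul,
      intervalIntegral.integral_of_le zero_le_one, integral_Ioc_eq_integral_Ioo]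

/-- The key radial change-of-variables identity (substituting `u = a²/r²`) from the
proof of Theorem 2 of the paper: both integrals are finite and
`∫ₐ^∞ (r²-1)^{-α/2} r^{n-λ-2} (1-a²/r²)^{(n-3)/2} dr
  = (1/2) a^{n-1-λ-α} ∫₀¹ u^{(α+λ-n+1)/2-1} (1-u)^{(n-3)/2} (1-u/a²)^{-α/2} du`. -/
theorem multilinear_embedding_stmt1 (n : ℕ) (hn : 2 ≤ n) (a α lam : ℝ) (ha : 1 ≤ a)
    (hα0 : 0 ≤ α) (hα1 : α < (n : ℝ) - 1) (hsum : (n : ℝ) - 1 < α + lam) :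
    IntegrableOn
      (fun r : ℝ => (r ^ 2 - 1) ^ (-(α / 2)) * r ^ ((n : ℝ) - lam - 2) *
        (1 - a ^ 2 / r ^ 2) ^ (((n : ℝ) - 3) / 2)) (Set.Ioi a) ∧
    IntervalIntegrable
      (fun u : ℝ => u ^ ((α + lam - (n : ℝ) + 1) / 2 - 1) * (1 - u) ^ (((n : ℝ) - 3) / 2) *
        (1 - u / a ^ 2) ^ (-(α / 2))) volume 0 1 ∧
    ∫ r in Set.Ioi a, (r ^ 2 - 1) ^ (-(α / 2)) * r ^ ((n : ℝ) - lam - 2) *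
        (1 - a ^ 2 / r ^ 2) ^ (((n : ℝ) - 3) / 2)
      = (1 / 2) * a ^ ((n : ℝ) - 1 - lam - α) *
        ∫ u in (0:ℝ)..1, u ^ ((α + lam - (n : ℝ) + 1) / 2 - 1) *
          (1 - u) ^ (((n : ℝ) - 3) / 2) * (1 - u / a ^ 2) ^ (-(α / 2)) :=
  multilinear_embedding_stmt1_general n a α lam ha hα0 hα1 hsum
end

section
/- Let n ≥ 2 be an integer and α₁, α₂, λ real numbers with 0 < α₁ < n, α₂ > 0, λ > 0, λ + α₂ > n-1, and 2n-2 < α₁ + α₂ + λ < 3n-2; set σ = 2 + α₁ + α₂ + λ - 2n. Then sup_{w ∈ ℝⁿ} |w|^σ ∫_{ℝⁿ} |x-w|^{-α₁} (1 + |x-w|² + |x|²)^{-(λ+α₂-n)/2 - 1} dx < ∞. -/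
open MeasureTheory Real

/-!
Put `β = (λ + α₂ - n)/2 + 1`, so that `α₁ + 2β = n + σ`. Since `1 + |x-w|² + |x|²` dominates
both `|x-w|²` and `|x|²`, the integrand is at most `|x-w|^{-γ₁} |x|^{-γ₂}` whenever
`γ₁ ≥ α₁`, `γ₂ ≥ 0` and `γ₁ - α₁ + γ₂ = 2β`; the hypotheses leave room to take `γ₁, γ₂ < n`,
and then `γ₁ + γ₂ = n + σ > n`. For such exponents the Riesz composition integral
`∫ |x-w|^{-γ₁} |x|^{-γ₂} dx` is `O(|w|^{n-γ₁-γ₂}) = O(|w|^{-σ})`: where `|x| ≤ |x-w|` one has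
`2|x-w| ≥ |x| + |w|/2` (and symmetrically), and by scaling
`∫ |x|^{-γ} (|x| + c)^{-δ} dx = c^{n-γ-δ} ∫ |x|^{-γ} (|x| + 1)^{-δ} dx`, which is finite for
`γ < n < γ + δ`.
-/

open Metric Module

section RieszComposition

variable {E : Type*} [NormedAddCommGroup E]

lemma rpow_neg_le_two_rpow_mul {u t γ : ℝ} (ht : 0 < t) (htu : t ≤ 2 * u) (hγ : 0 ≤ γ) :
    u ^ (-γ) ≤ 2 ^ γ * t ^ (-γ) := by
  calc u ^ (-γ) ≤ (t / 2) ^ (-γ) :=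
        rpow_le_rpow_of_nonpos (by positivity) (by linarith) (neg_nonpos.2 hγ)
    _ = 2 ^ γ * t ^ (-γ) := by
        rw [div_rpow ht.le zero_le_two, rpow_neg zero_le_two, div_inv_eq_mul, mul_comm]

lemma rpow_neg_div_two_le_of_sq_le {u v B a b : ℝ} (hu : 0 < u) (hv : 0 < v)
    (huB : u ^ 2 ≤ B) (hvB : v ^ 2 ≤ B) (ha : 0 ≤ a) (hb : 0 ≤ b) :
    B ^ (-(a + b) / 2) ≤ u ^ (-a) * v ^ (-b) := by
  have hB : 0 < B := (pow_pos hu 2).trans_le huB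
  have hsq : ∀ {y : ℝ}, 0 < y → ∀ c : ℝ, (y ^ 2) ^ (-c / 2) = y ^ (-c) := fun hy c ↦ by
    rw [← rpow_natCast, ← rpow_mul hy.le]
    ring_nf
  calc B ^ (-(a + b) / 2) = B ^ (-a / 2) * B ^ (-b / 2) := by
        rw [← rpow_add hB]
        ring_nf
    _ ≤ (u ^ 2) ^ (-a / 2) * (v ^ 2) ^ (-b / 2) := by
        gcongr ?_ * ?_
        · exact rpow_le_rpow_of_nonpos (by positivity) huB (by linarith)
        · exact rpow_le_rpow_of_nonpos (by positivity) hvB (by linarith)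
    _ = u ^ (-a) * v ^ (-b) := by rw [hsq hu, hsq hv]

lemma rpow_norm_sub_mul_rpow_one_add_sq_add_sq_le {α γ b : ℝ} (hαγ : α ≤ γ) (hb : 0 ≤ b)
    {x w : E} (hx : x ≠ 0) (hxw : x ≠ w) :
    ‖x - w‖ ^ (-α) * (1 + ‖x - w‖ ^ 2 + ‖x‖ ^ 2) ^ (-(γ - α + b) / 2) ≤
      ‖x - w‖ ^ (-γ) * ‖x‖ ^ (-b) := by
  have hxw₀ : 0 < ‖x - w‖ := norm_pos_iff.2 (sub_ne_zero.2 hxw)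
  calc _ ≤ ‖x - w‖ ^ (-α) * (‖x - w‖ ^ (-(γ - α)) * ‖x‖ ^ (-b)) := by
        gcongr
        exact rpow_neg_div_two_le_of_sq_le hxw₀ (norm_pos_iff.2 hx)
          (by nlinarith [sq_nonneg ‖x‖]) (by nlinarith [sq_nonneg ‖x - w‖]) (by linarith) hb
    _ = ‖x - w‖ ^ (-γ) * ‖x‖ ^ (-b) := by
        rw [← mul_assoc, ← rpow_add hxw₀]
        ring_nf

lemma rpow_norm_sub_mul_rpow_norm_le {γ₁ γ₂ : ℝ} (hγ₁ : 0 ≤ γ₁) (hγ₂ : 0 ≤ γ₂) {x w : E}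
    (hx : x ≠ 0) (hxw : x ≠ w) :
    ‖x - w‖ ^ (-γ₁) * ‖x‖ ^ (-γ₂) ≤
      2 ^ γ₁ * (‖x‖ ^ (-γ₂) * (‖x‖ + ‖w‖ / 2) ^ (-γ₁)) +
        2 ^ γ₂ * (‖x - w‖ ^ (-γ₁) * (‖x - w‖ + ‖w‖ / 2) ^ (-γ₂)) := by
  have hx₀ : 0 < ‖x‖ := norm_pos_iff.2 hx
  have hxw₀ : 0 < ‖x - w‖ := norm_pos_iff.2 (sub_ne_zero.2 hxw)
  have hw : ‖w‖ ≤ ‖x‖ + ‖x - w‖ := by simpa using norm_sub_le x (x - w)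
  rcases le_total ‖x‖ ‖x - w‖ with hle | hle
  · have hfar := rpow_neg_le_two_rpow_mul (u := ‖x - w‖) (t := ‖x‖ + ‖w‖ / 2) (by positivity)
      (by linarith) hγ₁
    calc _ ≤ 2 ^ γ₁ * (‖x‖ + ‖w‖ / 2) ^ (-γ₁) * ‖x‖ ^ (-γ₂) := by gcongr
      _ ≤ _ := by
        rw [mul_assoc, mul_comm ((‖x‖ + ‖w‖ / 2) ^ (-γ₁))]
        exact le_add_of_nonneg_right (by positivity)
  · have hfar := rpow_neg_le_two_rpow_mul (u := ‖x‖) (t := ‖x - w‖ + ‖w‖ / 2) (by positivity)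
      (by linarith) hγ₂
    calc _ ≤ ‖x - w‖ ^ (-γ₁) * (2 ^ γ₂ * (‖x - w‖ + ‖w‖ / 2) ^ (-γ₂)) := by gcongr
      _ ≤ _ := by
        rw [mul_left_comm]
        exact le_add_of_nonneg_left (by positivity)

variable [NormedSpace ℝ E]

lemma rpow_norm_mul_rpow_norm_add_eq_smul {γ δ c : ℝ} (hc : 0 < c) (x : E) :
    ‖x‖ ^ (-γ) * (‖x‖ + c) ^ (-δ) =
      c ^ (-γ - δ) * (‖c⁻¹ • x‖ ^ (-γ) * (‖c⁻¹ • x‖ + 1) ^ (-δ)) := by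
  have hx : ‖c⁻¹ • x‖ = ‖x‖ / c := by
    rw [norm_smul, norm_inv, norm_of_nonneg hc.le, inv_mul_eq_div]
  have hx1 : ‖x‖ / c + 1 = (‖x‖ + c) / c := by field_simp
  rw [hx, hx1, div_rpow (norm_nonneg x) hc.le, div_rpow (by positivity) hc.le,
    sub_eq_add_neg, rpow_add hc]
  field_simp

variable [FiniteDimensional ℝ E] [MeasurableSpace E] [BorelSpace E]
  (μ : Measure E) [μ.IsAddHaarMeasure]

lemma integrable_rpow_norm_mul_rpow_norm_add_one {γ δ : ℝ} (hγ₀ : 0 ≤ γ) (hδ₀ : 0 ≤ δ)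
    (hγ : γ < finrank ℝ E) (hγδ : finrank ℝ E < γ + δ) :
    Integrable (fun x : E ↦ ‖x‖ ^ (-γ) * (‖x‖ + 1) ^ (-δ)) μ := by
  have hmeas : AEStronglyMeasurable (fun x : E ↦ ‖x‖ ^ (-γ) * (‖x‖ + 1) ^ (-δ)) μ := by
    fun_prop
  have hball : IntegrableOn (fun x : E ↦ ‖x‖ ^ (-γ) * (‖x‖ + 1) ^ (-δ)) (ball 0 1) μ := by
    refine integrableOn_ball_of_norm_le_rpow (C := 1) ?_ hγ (.of_forall fun x ↦ ?_) hmeas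
    · exact_mod_cast (hγ₀.trans_lt hγ)
    · rw [one_mul, norm_of_nonneg (by positivity)]
      exact mul_le_of_le_one_right (by positivity)
        (rpow_le_one_of_one_le_of_nonpos (by linarith [norm_nonneg x]) (neg_nonpos.2 hδ₀))
  have hout : IntegrableOn (fun x : E ↦ ‖x‖ ^ (-γ) * (‖x‖ + 1) ^ (-δ)) (ball 0 1)ᶜ μ := by
    refine (((integrable_one_add_norm hγδ).const_mul (2 ^ γ)).integrableOn).mono'
      hmeas.restrict ((ae_restrict_iff' measurableSet_ball.compl).2 (.of_forall fun x hx ↦ ?_))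
    have hx : 1 ≤ ‖x‖ := by simpa using hx
    rw [norm_of_nonneg (by positivity), neg_add, rpow_add (by positivity), ← mul_assoc, add_comm 1]
    gcongr
    exact rpow_neg_le_two_rpow_mul (by positivity) (by linarith) hγ₀
  simpa using hball.union hout

lemma integrable_rpow_norm_mul_rpow_norm_add {γ δ c : ℝ} (hc : 0 < c) (hγ₀ : 0 ≤ γ)
    (hδ₀ : 0 ≤ δ) (hγ : γ < finrank ℝ E) (hγδ : finrank ℝ E < γ + δ) :
    Integrable (fun x : E ↦ ‖x‖ ^ (-γ) * (‖x‖ + c) ^ (-δ)) μ := by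
  simp_rw [rpow_norm_mul_rpow_norm_add_eq_smul hc]
  exact ((integrable_rpow_norm_mul_rpow_norm_add_one μ hγ₀ hδ₀ hγ hγδ).comp_smul
    (inv_ne_zero hc.ne')).const_mul _

lemma integral_rpow_norm_mul_rpow_norm_add {γ δ c : ℝ} (hc : 0 < c) :
    ∫ x, ‖x‖ ^ (-γ) * (‖x‖ + c) ^ (-δ) ∂μ =
      c ^ (finrank ℝ E - γ - δ) * ∫ x, ‖x‖ ^ (-γ) * (‖x‖ + 1) ^ (-δ) ∂μ := by
  simp_rw [rpow_norm_mul_rpow_norm_add_eq_smul hc, integral_const_mul,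
    Measure.integral_comp_inv_smul_of_nonneg μ (fun y ↦ ‖y‖ ^ (-γ) * (‖y‖ + 1) ^ (-δ)) hc.le,
    smul_eq_mul, ← mul_assoc, ← rpow_natCast, ← rpow_add hc]
  ring_nf

theorem exists_integral_rpow_norm_sub_mul_rpow_norm_le {γ₁ γ₂ : ℝ} (hγ₁₀ : 0 ≤ γ₁)
    (hγ₂₀ : 0 ≤ γ₂) (hγ₁ : γ₁ < finrank ℝ E) (hγ₂ : γ₂ < finrank ℝ E)
    (hγ : finrank ℝ E < γ₁ + γ₂) :
    ∃ C, 0 ≤ C ∧ ∀ w : E, w ≠ 0 →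
      Integrable (fun x ↦ ‖x - w‖ ^ (-γ₁) * ‖x‖ ^ (-γ₂)) μ ∧
        ∫ x, ‖x - w‖ ^ (-γ₁) * ‖x‖ ^ (-γ₂) ∂μ ≤ C * ‖w‖ ^ (finrank ℝ E - γ₁ - γ₂) := by
  have : Nontrivial E := nontrivial_of_finrank_pos (R := ℝ) (by exact_mod_cast hγ₁₀.trans_lt hγ₁)
  set J₁ := ∫ x, ‖x‖ ^ (-γ₂) * (‖x‖ + 1) ^ (-γ₁) ∂μ
  set J₂ := ∫ x, ‖x‖ ^ (-γ₁) * (‖x‖ + 1) ^ (-γ₂) ∂μ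
  have hJ₁ : 0 ≤ J₁ := integral_nonneg fun x ↦ by positivity
  have hJ₂ : 0 ≤ J₂ := integral_nonneg fun x ↦ by positivity
  refine ⟨(2 ^ γ₁ * J₁ + 2 ^ γ₂ * J₂) / 2 ^ (finrank ℝ E - γ₁ - γ₂), by positivity,
    fun w hw ↦ ?_⟩
  have hc : 0 < ‖w‖ / 2 := by positivity
  have hI₁ := (integrable_rpow_norm_mul_rpow_norm_add μ hc hγ₂₀ hγ₁₀ hγ₂ (by linarith)).const_mul
    (2 ^ γ₁)
  have hI₂ := ((integrable_rpow_norm_mul_rpow_norm_add μ hc hγ₁₀ hγ₂₀ hγ₁ hγ).comp_sub_right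
    w).const_mul (2 ^ γ₂)
  have hmaj := hI₁.add hI₂
  have hle : ∀ᵐ x ∂μ, ‖x - w‖ ^ (-γ₁) * ‖x‖ ^ (-γ₂) ≤
      2 ^ γ₁ * (‖x‖ ^ (-γ₂) * (‖x‖ + ‖w‖ / 2) ^ (-γ₁)) +
        2 ^ γ₂ * (‖x - w‖ ^ (-γ₁) * (‖x - w‖ + ‖w‖ / 2) ^ (-γ₂)) := by
    filter_upwards [Measure.ae_ne μ 0, Measure.ae_ne μ w] with x hx hxw
    exact rpow_norm_sub_mul_rpow_norm_le hγ₁₀ hγ₂₀ hx hxw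
  have hint : Integrable (fun x ↦ ‖x - w‖ ^ (-γ₁) * ‖x‖ ^ (-γ₂)) μ :=
    hmaj.mono' (by fun_prop) (hle.mono fun x hx ↦ by rwa [norm_of_nonneg (by positivity)])
  refine ⟨hint, (integral_mono_ae hint hmaj hle).trans_eq ?_⟩
  rw [integral_add' hI₁ hI₂, integral_const_mul, integral_const_mul,
    integral_sub_right_eq_self (fun x ↦ ‖x‖ ^ (-γ₁) * (‖x‖ + ‖w‖ / 2) ^ (-γ₂)) w,
    integral_rpow_norm_mul_rpow_norm_add μ hc, integral_rpow_norm_mul_rpow_norm_add μ hc,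
    sub_right_comm _ γ₂, div_rpow (norm_nonneg w) zero_le_two]
  field_simp
  ring

end RieszComposition

theorem multilinear_embedding_stmt4_general (n : ℕ) (α₁ α₂ lam σ : ℝ)
    (hα₁n : α₁ < (n : ℝ))
    (h1 : (n : ℝ) - 1 < lam + α₂)
    (h2 : 2 * (n : ℝ) - 2 < α₁ + α₂ + lam) (h3 : α₁ + α₂ + lam < 3 * (n : ℝ) - 2)
    (hσ : σ = 2 + α₁ + α₂ + lam - 2 * (n : ℝ)) :
    ∃ C : ℝ, ∀ w : EuclideanSpace ℝ (Fin n),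
      ‖w‖ ^ σ *
        ∫ x : EuclideanSpace ℝ (Fin n),
          ‖x - w‖ ^ (-α₁) *
            (1 + ‖x - w‖ ^ 2 + ‖x‖ ^ 2) ^ (-(lam + α₂ - (n : ℝ)) / 2 - 1)
        ≤ C := by
  -- any `γ₂` in `(σ, min n 2β]` works: `γ₂ ≤ 2β` gives `γ₁ ≥ α₁` and `γ₂ > σ` gives `γ₁ < n`
  set γ₂ := min (lam + α₂ - n + 2) ((σ + n) / 2)
  set γ₁ := n + σ - γ₂
  have hγ₂₀ : 0 ≤ γ₂ := le_min (by linarith) (by linarith)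
  have hγ₂ : γ₂ < n := min_lt_of_right_lt (by linarith)
  have hσγ₂ : σ < γ₂ := lt_min (by linarith) (by linarith)
  have hα₁γ₁ : α₁ ≤ γ₁ := by linarith [min_le_left (lam + α₂ - n + 2) ((σ + n) / 2)]
  obtain ⟨C, hC₀, hC⟩ := exists_integral_rpow_norm_sub_mul_rpow_norm_le
    (volume : Measure (EuclideanSpace ℝ (Fin n))) (γ₁ := γ₁) (γ₂ := γ₂)
    (by linarith) hγ₂₀ (by rw [finrank_euclideanSpace_fin]; linarith)
    (by rwa [finrank_euclideanSpace_fin]) (by rw [finrank_euclideanSpace_fin]; linarith)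
  have hexp : -(lam + α₂ - n) / 2 - 1 = -(γ₁ - α₁ + γ₂) / 2 := by linarith
  refine ⟨C, fun w ↦ ?_⟩
  rcases eq_or_ne w 0 with rfl | hw
  · simpa [zero_rpow (by linarith : σ ≠ 0)] using hC₀
  obtain ⟨hint, hbound⟩ := hC w hw
  have : Nontrivial (EuclideanSpace ℝ (Fin n)) := ⟨⟨w, 0, hw⟩⟩
  have hdom : ∫ x : EuclideanSpace ℝ (Fin n), ‖x - w‖ ^ (-α₁) *
      (1 + ‖x - w‖ ^ 2 + ‖x‖ ^ 2) ^ (-(γ₁ - α₁ + γ₂) / 2) ≤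
        ∫ x : EuclideanSpace ℝ (Fin n), ‖x - w‖ ^ (-γ₁) * ‖x‖ ^ (-γ₂) := by
    refine integral_mono_of_nonneg (.of_forall fun x ↦ by positivity) hint ?_
    filter_upwards [Measure.ae_ne volume 0, Measure.ae_ne volume w] with x hx hxw
    exact rpow_norm_sub_mul_rpow_one_add_sq_add_sq_le hα₁γ₁ hγ₂₀ hx hxw
  rw [hexp]
  calc _ ≤ ‖w‖ ^ σ * (C * ‖w‖ ^ (-σ)) := by
        gcongr
        simpa [show (n : ℝ) - γ₁ - γ₂ = -σ by ring] using hdom.trans hbound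
    _ = C := by
        rw [rpow_neg (norm_nonneg w)]
        field_simp

/-- Step 1 of the proof of Theorem 3 of the paper: the uniform bound
`sup_w |w|^σ ∫ |x-w|^{-α₁} (1+|x-w|²+|x|²)^{-(λ+α₂-n)/2-1} dx < ∞`. -/
theorem multilinear_embedding_stmt4 (n : ℕ) (hn : 2 ≤ n) (α₁ α₂ lam σ : ℝ)
    (hα₁0 : 0 < α₁) (hα₁n : α₁ < (n : ℝ)) (hα₂ : 0 < α₂) (hlam : 0 < lam)
    (h1 : (n : ℝ) - 1 < lam + α₂)
    (h2 : 2 * (n : ℝ) - 2 < α₁ + α₂ + lam) (h3 : α₁ + α₂ + lam < 3 * (n : ℝ) - 2)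
    (hσ : σ = 2 + α₁ + α₂ + lam - 2 * (n : ℝ)) :
    ∃ C : ℝ, ∀ w : EuclideanSpace ℝ (Fin n),
      ‖w‖ ^ σ *
        ∫ x : EuclideanSpace ℝ (Fin n),
          ‖x - w‖ ^ (-α₁) *
            (1 + ‖x - w‖ ^ 2 + ‖x‖ ^ 2) ^ (-(lam + α₂ - (n : ℝ)) / 2 - 1)
        ≤ C :=
  multilinear_embedding_stmt4_general n α₁ α₂ lam σ hα₁n h1 h2 h3 hσ
end
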